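/- arXiv:2512.01398 — 2 statements merged into one kernel-verified Lean document; each statement's English description precedes it below -/
import Mathlib

section
/- Let X be a finitely generated free abelian group and θ : X → X an involutive group homomorphism. Let X̆ = { λ − θ(λ) : λ ∈ X } and X_ι = X / X̆. Then X_ι has no odd torsion: for any x ∈ X_ι and any odd natural number n with n·x = 0, we have x = 0. -/
/-!
If `n • l = μ - θ μ` with `n` odd, applying `θ` gives `n • θ l = θ μ - μ`, so `n • (l + θ l) = 0`
and, `X` being torsion-free, `θ l = -l`. Then `2 • l = l - θ l` lies in `X̆`, and so does
`l = n • l - ((n - 1) / 2) • (2 • l)`.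
-/

namespace AddMonoidHom

variable {X : Type*} [AddCommGroup X] {θ : X →+ X}

theorem nsmul_add_apply_eq_zero_of_nsmul_mem_range_id_sub (hθ : ∀ x, θ (θ x) = x) {n : ℕ}
    {l : X} (h : n • l ∈ (id X - θ).range) : n • (l + θ l) = 0 := by
  obtain ⟨μ, hμ⟩ := h
  have hμθ : θ μ - μ = n • θ l := by
    rw [← map_nsmul, ← hμ, sub_apply, id_apply, map_sub, hθ]
  rw [smul_add, ← hμ, ← hμθ, sub_apply, id_apply]
  abel

theorem apply_eq_neg_of_nsmul_mem_range_id_sub [IsAddTorsionFree X] (hθ : ∀ x, θ (θ x) = x)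
    {n : ℕ} (hn : n ≠ 0) {l : X} (h : n • l ∈ (id X - θ).range) : θ l = -l :=
  eq_neg_of_add_eq_zero_right <| (nsmul_eq_zero_iff.mp
    (nsmul_add_apply_eq_zero_of_nsmul_mem_range_id_sub hθ h)).resolve_right hn

theorem two_nsmul_mem_range_id_sub_of_apply_eq_neg {l : X} (hl : θ l = -l) :
    2 • l ∈ (id X - θ).range :=
  ⟨l, by rw [sub_apply, id_apply, hl, sub_neg_eq_add, two_nsmul]⟩

theorem mem_range_id_sub_of_odd_nsmul_mem [IsAddTorsionFree X] (hθ : ∀ x, θ (θ x) = x)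
    {n : ℕ} (hn : Odd n) {l : X} (h : n • l ∈ (id X - θ).range) : l ∈ (id X - θ).range := by
  obtain ⟨k, rfl⟩ := hn
  have hl := apply_eq_neg_of_nsmul_mem_range_id_sub hθ (by omega) h
  have h2 := two_nsmul_mem_range_id_sub_of_apply_eq_neg hl
  have hdiff := (id X - θ).range.sub_mem h ((id X - θ).range.nsmul_mem h2 k)
  rwa [smul_smul, mul_comm k, add_nsmul, one_nsmul, add_sub_cancel_left] at hdiff

end AddMonoidHom

theorem stmt0_general (X : Type*) [AddCommGroup X] [Module.Free ℤ X]
    (θ : X →+ X) (hθ : ∀ x, θ (θ x) = x) :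
    ∀ (x : X ⧸ (AddMonoidHom.id X - θ).range) (n : ℕ),
      Odd n → n • x = 0 → x = 0 := by
  have : IsAddTorsionFree X := Module.isTorsionFree_int_iff_isAddTorsionFree.mp inferInstance
  intro x n hn hnx
  induction x using QuotientAddGroup.induction_on with
  | H l =>
    rw [← QuotientAddGroup.mk_nsmul, QuotientAddGroup.eq_zero_iff] at hnx
    exact (QuotientAddGroup.eq_zero_iff l).mpr
      (AddMonoidHom.mem_range_id_sub_of_odd_nsmul_mem hθ hn hnx)

/-- The ι-weight lattice `X_ι = X / {λ - θλ}` of a finitely generated free abelian group `X`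
with involution `θ` has no odd torsion. -/
theorem stmt0 (X : Type*) [AddCommGroup X] [Module.Free ℤ X] [Module.Finite ℤ X]
    (θ : X →+ X) (hθ : ∀ x, θ (θ x) = x) :
    ∀ (x : X ⧸ (AddMonoidHom.id X - θ).range) (n : ℕ),
      Odd n → n • x = 0 → x = 0 :=
  stmt0_general X θ hθ
end

section
/- Let A be a field of characteristic p > 2 and let R = ⊕_{ζ ∈ Γ} R_ζ be a Γ-graded commutative A-algebra where Γ is an abelian group with no p-torsion. Assume that the product of any two nonzero homogeneous elements of R is nonzero. Then R is reduced. -/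
/-- A `Γ`-graded commutative algebra over a field of characteristic `p > 2`, with `Γ` an
abelian group with no `p`-torsion, in which the product of nonzero homogeneous elements is
nonzero, is reduced. -/
theorem stmt3 (A R Γ : Type*) [Field A] [CommRing R] [Algebra A R]
    [AddCommGroup Γ] [DecidableEq Γ] (p : ℕ) [CharP A p] (hp : 2 < p)
    (𝒜 : Γ → Submodule A R) [GradedAlgebra 𝒜]
    (hΓ : ∀ (k : ℕ) (γ : Γ), p ^ k • γ = 0 → γ = 0)
    (hhom : ∀ (γ γ' : Γ) (f g : R), f ∈ 𝒜 γ → g ∈ 𝒜 γ' → f ≠ 0 → g ≠ 0 → f * g ≠ 0) :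
    IsReduced R := by
  classical
  by_cases hR : Nontrivial R
  swap
  · have : Subsingleton R := not_nontrivial_iff_subsingleton.mp hR
    constructor
    intro x _
    exact Subsingleton.elim _ _
  haveI := hR
  haveI : CharP R p := charP_of_injective_algebraMap (algebraMap A R).injective p
  have hpprime : p.Prime := (CharP.char_is_prime_or_zero A p).resolve_right (by omega)
  haveI : ExpChar R p := .prime hpprime
  have hp1 : 1 < p := by omega
  -- powers of nonzero homogeneous elements are nonzero
  have hpow : ∀ (γ : Γ) (f : R), f ∈ 𝒜 γ → f ≠ 0 → ∀ m : ℕ, f ^ m ≠ 0 := by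
    intro γ f hf hf0 m
    induction m with
    | zero => simp
    | succ m ih =>
      rw [pow_succ]
      exact hhom (m • γ) γ (f ^ m) f (SetLike.pow_mem_graded m hf) hf ih hf0
  constructor
  intro x hx
  obtain ⟨n, hn⟩ := hx
  set q := p ^ n with hq_def
  have hnq : n ≤ q := (Nat.lt_pow_self (n := n) hp1).le
  have hq : x ^ q = 0 := by
    calc x ^ q = x ^ n * x ^ (q - n) := by rw [← pow_add, Nat.add_sub_cancel' hnq]
    _ = 0 := by rw [hn, zero_mul]
  -- injectivity of γ ↦ q • γ
  have hinj : ∀ γ γ' : Γ, q • γ = q • γ' → γ = γ' := by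
    intro γ γ' h
    have : q • (γ - γ') = 0 := by rw [smul_sub, h, sub_self]
    have := hΓ n (γ - γ') this
    exact sub_eq_zero.mp this
  -- each homogeneous component of x is zero
  have hcomp : ∀ γ : Γ, (DirectSum.decompose 𝒜 x γ : R) = 0 := by
    intro γ
    by_contra hne
    have hγmem : γ ∈ (DirectSum.decompose 𝒜 x).support := by
      rw [DFinsupp.mem_support_iff]
      intro h
      exact hne (by rw [h]; rfl)
    have hsumx : x ^ q = ∑ γ' ∈ (DirectSum.decompose 𝒜 x).support,
        ((DirectSum.decompose 𝒜 x γ' : R)) ^ q := by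
      conv_lhs => rw [← DirectSum.sum_support_decompose 𝒜 x]
      exact sum_pow_char_pow (p := p) (n := n) _ _
    have h2 : (DirectSum.decompose 𝒜 (x ^ q) (q • γ) : R)
        = (DirectSum.decompose 𝒜 x γ : R) ^ q := by
      rw [hsumx, DirectSum.decompose_sum, DFinsupp.finset_sum_apply,
        AddSubmonoidClass.coe_finset_sum]
      rw [Finset.sum_eq_single γ]
      · exact DirectSum.decompose_of_mem_same 𝒜
          (SetLike.pow_mem_graded q (SetLike.coe_mem _))
      · intro b _ hbγ
        rw [DirectSum.decompose_of_mem_ne 𝒜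
          (SetLike.pow_mem_graded q (SetLike.coe_mem _))
          (fun h => hbγ (hinj b γ h))]
      · intro h; exact absurd hγmem h
    rw [hq] at h2
    simp only [DirectSum.decompose_zero, DirectSum.zero_apply, ZeroMemClass.coe_zero] at h2
    exact hpow γ _ (SetLike.coe_mem _) hne q h2.symm
  rw [← DirectSum.sum_support_decompose 𝒜 x]
  exact Finset.sum_eq_zero fun γ _ => hcomp γ
end
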